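/- In the setting where d(·,E)^{-α} ∈ A₁, the following pointwise free-hole inclusion holds: let B = B_d(y,r) with λ₀ := 1/(K_d(2K_d+1)), and suppose B_d(y,λ₀r) ∩ E ≠ ∅. Then for every x ∈ B_d(y,λ₀r) \ closure(E), setting t = d(x,E), one has B_d(x,t) ⊆ B \ E and hence ρ_{d,E}(B) ≥ d(x,E); consequently ρ_{d,E}(B)^{-α} ≤ ess inf_{λ₀B} d(·,E)^{-α} whenever μ(closure(E)) = 0. -/

import Mathlib

open MeasureTheory ENNReal Set

namespace WPA1

variable {X : Type*}

/-- `d` is a quasi-distance on `X` with triangular constant `K`. -/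
def QD (d : X → X → ℝ) (K : ℝ) : Prop :=
  1 ≤ K ∧ (∀ x y, 0 ≤ d x y) ∧ (∀ x y, d x y = 0 ↔ x = y) ∧
    (∀ x y, d x y = d y x) ∧ ∀ x y z, d x z ≤ K * (d x y + d y z)

/-- The `d`-ball of center `x` and radius `r`. -/
def ball (d : X → X → ℝ) (x : X) (r : ℝ) : Set X := {y | d x y < r}

/-- The optimal (least) triangular constant of `d`. -/
noncomputable def Kopt (d : X → X → ℝ) : ℝ := sInf {K | QD d K}

/-- Distance from a point to a set: `d(x,E) = inf_{e ∈ E} d(x,e)`. -/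
noncomputable def distE (d : X → X → ℝ) (E : Set X) (x : X) : ℝ :=
  sInf ((d x) '' E)

/-- The maximal `E`-free hole function
`ρ_{d,E}(B_d(x,r)) = sup {0 < s ≤ 2Kr : ∃ y, B_d(y,s) ⊆ B_d(x,r) \ E}`
(with value `0` when the set is empty, by `Real.sSup` conventions). -/
noncomputable def hole (d : X → X → ℝ) (K : ℝ) (E : Set X) (x : X) (r : ℝ) : ℝ :=
  sSup {s | 0 < s ∧ s ≤ 2 * K * r ∧ ∃ y, ball d y s ⊆ ball d x r \ E}

/-- The maximal hole function `ρ_{d,E}` is doubling with constant `C`. -/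
def HoleDoubling (d : X → X → ℝ) (K : ℝ) (E : Set X) (C : ℝ) : Prop :=
  ∀ x r, 0 < r → hole d K E x (2 * r) ≤ C * hole d K E x r

/-- The `d`-balls are open and form neighborhood bases: the ambient topology is
the one induced by the quasi-distance `d`. -/
def BallsBasis [TopologicalSpace X] (d : X → X → ℝ) : Prop :=
  (∀ x r, IsOpen (ball d x r)) ∧ ∀ x, ∀ U ∈ nhds x, ∃ r > 0, ball d x r ⊆ U

/-- The measure `μ` is doubling (with constant `A`) on `d`-balls, which have
positive finite measure; i.e. `(X,d,μ)` is a space of homogeneous type. -/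
def DoublingBalls [MeasurableSpace X] (μ : Measure X) (d : X → X → ℝ) (A : ℝ) : Prop :=
  ∀ x r, 0 < r → 0 < μ (ball d x r) ∧ μ (ball d x r) < ⊤ ∧
    μ (ball d x (2 * r)) ≤ ENNReal.ofReal A * μ (ball d x r)

/-- `E` is `(σ,γ)`-weakly porous with respect to `d` and `μ`. -/
def WeaklyPorousWith [MeasurableSpace X] (μ : Measure X) (d : X → X → ℝ) (K : ℝ)
    (E : Set X) (σ γ : ℝ) : Prop :=
  ∀ x r, 0 < r → ∃ (n : ℕ) (c : Fin n → X) (ρ : Fin n → ℝ),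
    (∀ i j, i ≠ j → Disjoint (ball d (c i) (ρ i)) (ball d (c j) (ρ j))) ∧
    (∀ i, ball d (c i) (ρ i) ⊆ ball d x r \ E) ∧
    (∀ i, γ * hole d K E x r ≤ ρ i) ∧
    (∀ i, ρ i ≤ 2 * K * r) ∧
    ENNReal.ofReal σ * μ (ball d x r) ≤ ∑ i, μ (ball d (c i) (ρ i))

/-- `E` is weakly porous with respect to `d` and `μ`. -/
def WeaklyPorous [MeasurableSpace X] (μ : Measure X) (d : X → X → ℝ) (K : ℝ)
    (E : Set X) : Prop :=
  ∃ σ γ : ℝ, σ ∈ Set.Ioo (0:ℝ) 1 ∧ γ ∈ Set.Ioo (0:ℝ) 1 ∧ WeaklyPorousWith μ d K E σ γ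

/-- The weight `d(·,E)^{-α}`, valued in `ℝ≥0∞` (so it is `∞` on `{d(·,E)=0}`). -/
noncomputable def wgt (d : X → X → ℝ) (E : Set X) (α : ℝ) (x : X) : ℝ≥0∞ :=
  ENNReal.ofReal (distE d E x) ^ (-α)

/-- `w` is an `A₁(X,d,μ)`-weight: `w` is locally integrable and the mean value of `w`
over every `d`-ball is bounded by a constant times its essential infimum there. -/
def MemA1 [MeasurableSpace X] (μ : Measure X) (d : X → X → ℝ) (w : X → ℝ≥0∞) : Prop :=
  (∀ x r, 0 < r → ∫⁻ y in ball d x r, w y ∂μ < ⊤) ∧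
  ∃ C : ℝ, 0 < C ∧ ∀ x r, 0 < r →
    ∫⁻ y in ball d x r, w y ∂μ ≤
      ENNReal.ofReal C * essInf w (μ.restrict (ball d x r)) * μ (ball d x r)


/-! For `x ∈ λ₀B` off `closure E`, `t = d(x,E)` is positive because `d`-balls form a
neighbourhood basis, and `t < 2Kλ₀r` because `λ₀B` meets `E`. The quasi-triangle inequality
then puts `B_d(x,t)` inside `B_d(y, K(λ₀r + 2Kλ₀r)) = B`, and `B_d(x,t)` misses `E` by the
definition of `t`, so `t` is an admissible radius for `ρ_{d,E}(B)`. Since `μ`-almost every point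
of `λ₀B` lies off `closure E`, the bound on the essential infimum follows because `s ↦ s^{-α}`
is antitone. -/

section QuasiDistance

variable {X : Type*} {d : X → X → ℝ} {K : ℝ} {E : Set X} {x y e : X}

lemma distE_le (hnn : ∀ a b, 0 ≤ d a b) (he : e ∈ E) : distE d E x ≤ d x e :=
  csInf_le ⟨0, by rintro _ ⟨e', -, rfl⟩; exact hnn x e'⟩ ⟨e, he, rfl⟩

lemma le_distE (hE : E.Nonempty) {s : ℝ} (h : ∀ e ∈ E, s ≤ d x e) : s ≤ distE d E x :=
  le_csInf (hE.image _) (by rintro _ ⟨e, he, rfl⟩; exact h e he)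

lemma ball_distE_subset_compl (hnn : ∀ a b, 0 ≤ d a b) : ball d x (distE d E x) ⊆ Eᶜ :=
  fun _ hz hzE => (lt_irrefl _) ((distE_le hnn hzE).trans_lt hz)

lemma distE_pos_of_notMem_closure [TopologicalSpace X] (hb : BallsBasis d) (hE : E.Nonempty)
    (hx : x ∉ closure E) : 0 < distE d E x := by
  obtain ⟨s, hs, hsub⟩ := hb.2 x _ (isClosed_closure.isOpen_compl.mem_nhds hx)
  exact hs.trans_le <| le_distE hE fun e he =>
    not_lt.1 fun hlt => hsub hlt (subset_closure he)

lemma le_hole {s r : ℝ} (hs : 0 < s) (hsr : s ≤ 2 * K * r)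
    (hsub : ball d x s ⊆ ball d y r \ E) : s ≤ hole d K E y r :=
  le_csSup ⟨2 * K * r, fun _ h => h.2.1⟩ ⟨hs, hsr, x, hsub⟩

namespace QD

lemma ball_subset_ball (hd : QD d K) {a b : ℝ} (hx : x ∈ ball d y a) :
    ball d x b ⊆ ball d y (K * (a + b)) := fun z hz =>
  (hd.2.2.2.2 y x z).trans_lt (mul_lt_mul_of_pos_left (add_lt_add hx hz) (by linarith [hd.1]))

lemma distE_lt (hd : QD d K) {a : ℝ} (hx : x ∈ ball d y a) (he : e ∈ ball d y a ∩ E) :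
    distE d E x < 2 * K * a := by
  have hy : y ∈ ball d x a := by
    change d x y < a
    rw [hd.2.2.2.1]
    exact hx
  have := (distE_le hd.2.1 he.2).trans_lt (hd.ball_subset_ball hy he.1)
  linarith

theorem ball_distE_subset_ball_diff [TopologicalSpace X] (hd : QD d K) (hb : BallsBasis d)
    {l r : ℝ} (hlr : K * (2 * K + 1) * l ≤ r) (he : e ∈ ball d y l ∩ E)
    (hx : x ∈ ball d y l \ closure E) :
    ball d x (distE d E x) ⊆ ball d y r \ E ∧ distE d E x ≤ hole d K E y r := by
  have hK : 0 ≤ K := by linarith [hd.1]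
  have ht := hd.distE_lt hx.1 he
  have hrad : K * (l + distE d E x) ≤ r :=
    calc K * (l + distE d E x) ≤ K * (l + 2 * K * l) := by gcongr
      _ = K * (2 * K + 1) * l := by ring
      _ ≤ r := hlr
  have hsub : ball d x (distE d E x) ⊆ ball d y r \ E := fun z hz =>
    ⟨(hd.ball_subset_ball hx.1 hz).trans_le hrad, ball_distE_subset_compl hd.2.1 hz⟩
  have hl : 0 < l := (hd.2.1 y e).trans_lt he.1
  have hlr' : l ≤ r := by
    nlinarith [mul_nonneg (mul_nonneg (sub_nonneg.2 hd.1) (by linarith : 0 ≤ 2 * K + 3)) hl.le]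
  refine ⟨hsub, le_hole (distE_pos_of_notMem_closure hb ⟨e, he.2⟩ hx.2) ?_ hsub⟩
  calc distE d E x ≤ 2 * K * l := ht.le
    _ ≤ 2 * K * r := by gcongr

end QD

lemma ofReal_rpow_neg_le_essInf_wgt [MeasurableSpace X] {μ : Measure X} {h α : ℝ} (hα : 0 ≤ α)
    (hdist : ∀ᵐ x ∂μ, distE d E x ≤ h) : ENNReal.ofReal h ^ (-α) ≤ essInf (wgt d E α) μ := by
  refine le_essInf_of_ae_le _ ?_
  filter_upwards [hdist] with x hx
  rw [wgt, ENNReal.rpow_neg, ENNReal.rpow_neg]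
  exact ENNReal.inv_le_inv.2 (ENNReal.rpow_le_rpow (ENNReal.ofReal_le_ofReal hx) hα)

end QuasiDistance

theorem statement12_general {X : Type*} [TopologicalSpace X] [MeasurableSpace X] [BorelSpace X]
    (μ : Measure X) (d : X → X → ℝ) (K : ℝ) (hd : QD d K) (hb : BallsBasis d)
    (E : Set X) (y : X) (r : ℝ)
    (hmeet : (ball d y (r / (K * (2 * K + 1))) ∩ E).Nonempty) :
    (∀ x ∈ ball d y (r / (K * (2 * K + 1))) \ closure E,
      ball d x (distE d E x) ⊆ ball d y r \ E ∧ distE d E x ≤ hole d K E y r) ∧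
    (∀ α : ℝ, 0 < α → μ (closure E) = 0 →
      ENNReal.ofReal (hole d K E y r) ^ (-α) ≤
        essInf (wgt d E α) (μ.restrict (ball d y (r / (K * (2 * K + 1)))))) := by
  obtain ⟨e, he⟩ := hmeet
  have hK : K * (2 * K + 1) ≠ 0 := by nlinarith [hd.1]
  have hinclusion : ∀ x ∈ ball d y (r / (K * (2 * K + 1))) \ closure E,
      ball d x (distE d E x) ⊆ ball d y r \ E ∧ distE d E x ≤ hole d K E y r := fun x hx =>
    hd.ball_distE_subset_ball_diff hb (mul_div_cancel₀ r hK).le he hx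
  refine ⟨hinclusion, fun α hα hμE => ofReal_rpow_neg_le_essInf_wgt hα.le ?_⟩
  filter_upwards [ae_restrict_mem (hb.1 _ _).measurableSet,
    ae_restrict_of_ae (measure_eq_zero_iff_ae_notMem.1 hμE)] with x hxB hxE
  exact (hinclusion x ⟨hxB, hxE⟩).2

/-- Pointwise free-hole inclusion: with `λ₀ = 1/(K_d(2K_d+1))` and `λ₀B ∩ E ≠ ∅`,
for every `x ∈ λ₀B \ closure E` (with `t = d(x,E)`) one has `B_d(x,t) ⊆ B \ E`
and `ρ_{d,E}(B) ≥ d(x,E)`; consequently, if `μ(closure E) = 0`, then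
`ρ_{d,E}(B)^{-α} ≤ ess inf_{λ₀B} d(·,E)^{-α}`. -/
theorem statement12 {X : Type*} [TopologicalSpace X] [MeasurableSpace X] [BorelSpace X]
    (μ : Measure X) (d : X → X → ℝ) (K : ℝ) (hd : QD d K) (hb : BallsBasis d)
    (E : Set X) (hE : E.Nonempty) (y : X) (r : ℝ) (hr : 0 < r)
    (hmeet : (ball d y (r / (K * (2 * K + 1))) ∩ E).Nonempty) :
    (∀ x ∈ ball d y (r / (K * (2 * K + 1))) \ closure E,
      ball d x (distE d E x) ⊆ ball d y r \ E ∧ distE d E x ≤ hole d K E y r) ∧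
    (∀ α : ℝ, 0 < α → μ (closure E) = 0 →
      ENNReal.ofReal (hole d K E y r) ^ (-α) ≤
        essInf (wgt d E α) (μ.restrict (ball d y (r / (K * (2 * K + 1)))))) :=
  statement12_general μ d K hd hb E y r hmeet

end WPA1
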